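/- arXiv:1501.04558 — 6 statements merged into one kernel-verified Lean document; each statement's English description precedes it below -/
import Mathlib

section
/- Every binary idempotent polymorphism of the partially reflexive path P_{10α01} is a projection (i.e., equals one of the two coordinate projections). -/
/-!
Since `0` is looped, `f 0 1` is adjacent to `f 0 0 = 0`, so `f 0 1 ∈ {0, 1}`; if `f 0 1 = 1`,
then `f 1 0 ∈ {0, 1}` is adjacent to the loopless vertex `1 = f 0 1`, so `f 1 0 = 0`. Up to
swapping the arguments we may thus assume `f 0 1 = 0`, and then `f x y = x` for `x ≤ y`: on the
superdiagonal, `f i (i+1) ≤ i` propagates upwards from `f 0 1 = 0` and `f i (i+1) ≥ i`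
propagates downwards from the loop at `n - 1`; further up, column by column, `f x y` is
squeezed between `f (x-1) (y-1) = x-1` and `f (x+1) (y-1) = x+1`, or for `x = 0` it is adjacent
to `f 0 (y-1) = 0` (loop at `0`) but not equal to the loopless `f 1 (y-1) = 1`. The loopless
vertex `n - 2` then forces `f (n-1) (n-2) = n-1`, and the same argument on the reversed path,
which again has the shape `10α'01`, gives `f x y = x` for `x ≥ y`.
-/

/-- Edge relation of the partially reflexive path on `Fin n` with loops given by `β`. -/
def pathEdge (n : ℕ) (β : Fin n → Bool) (x y : Fin n) : Prop :=
  x.val + 1 = y.val ∨ y.val + 1 = x.val ∨ (x = y ∧ β x = true)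

section PathEdge

variable {n : ℕ} {β : Fin n → Bool} {x y : Fin n}

theorem pathEdge_of_val_add_one (h : x.val + 1 = y.val) : pathEdge n β x y :=
  Or.inl h

theorem pathEdge_of_val_eq_add_one (h : x.val = y.val + 1) : pathEdge n β x y :=
  Or.inr (Or.inl h.symm)

theorem pathEdge_self (h : β x = true) : pathEdge n β x x :=
  Or.inr (Or.inr ⟨rfl, h⟩)

theorem pathEdge.symm (h : pathEdge n β x y) : pathEdge n β y x := by
  rcases h with h | h | ⟨rfl, h⟩
  exacts [Or.inr (Or.inl h), Or.inl h, pathEdge_self h]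

theorem pathEdge.val_le_add_one (h : pathEdge n β x y) : x.val ≤ y.val + 1 := by
  rcases h with h | h | ⟨rfl, -⟩ <;> omega

theorem pathEdge.val_ne_of_loopless (hy : β y = false) (h : pathEdge n β x y) :
    x.val ≠ y.val := by
  rintro hxy
  rcases h with h | h | ⟨rfl, h⟩
  · omega
  · omega
  · simp [hy] at h

theorem pathEdge_rev_iff :
    pathEdge n β x.rev y.rev ↔ pathEdge n (fun z => β z.rev) x y := by
  simp only [pathEdge, Fin.val_rev, Fin.rev_inj, ← or_assoc]
  refine or_congr ?_ Iff.rfl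
  omega

end PathEdge

def IsPolymorphism (n : ℕ) (β : Fin n → Bool) (f : Fin n → Fin n → Fin n) : Prop :=
  ∀ x x' y y' : Fin n, pathEdge n β x y → pathEdge n β x' y' → pathEdge n β (f x x') (f y y')

namespace IsPolymorphism

variable {n : ℕ} {β : Fin n → Bool} {f : Fin n → Fin n → Fin n}

theorem swap (hf : IsPolymorphism n β f) : IsPolymorphism n β (fun x y => f y x) :=
  fun _ _ _ _ hxy hxy' => hf _ _ _ _ hxy' hxy

theorem rev (hf : IsPolymorphism n β f) :
    IsPolymorphism n (fun z => β z.rev) (fun x y => (f x.rev y.rev).rev) := by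
  intro x x' y y' hxy hxy'
  rw [← pathEdge_rev_iff] at hxy hxy' ⊢
  simpa only [Fin.rev_rev] using hf _ _ _ _ hxy hxy'

theorem val_apply_le_of_val_add_one (hf : IsPolymorphism n β f) (hn : 2 ≤ n)
    (h01 : f ⟨0, by omega⟩ ⟨1, by omega⟩ = ⟨0, by omega⟩) :
    ∀ x y : Fin n, x.val + 1 = y.val → (f x y).val ≤ x.val
  | ⟨0, _⟩, y, hxy => by rw [show y = ⟨1, by omega⟩ from Fin.ext hxy.symm, h01]
  | ⟨i + 1, hi⟩, y, hxy => by
    have hprev := val_apply_le_of_val_add_one hf hn h01 ⟨i, by omega⟩ ⟨i + 1, hi⟩ rfl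
    have e := hf ⟨i + 1, hi⟩ y ⟨i, by omega⟩ ⟨i + 1, hi⟩
      (pathEdge_of_val_eq_add_one rfl) (pathEdge_of_val_eq_add_one hxy.symm)
    have := e.val_le_add_one
    simp only at hprev this ⊢
    omega

theorem le_val_apply_of_val_add_one (hf : IsPolymorphism n β f) (hidem : ∀ x, f x x = x)
    (hn : 0 < n) (hlast : β ⟨n - 1, by omega⟩ = true)
    (x y : Fin n) (hxy : x.val + 1 = y.val) : x.val ≤ (f x y).val := by
  by_cases hy : y.val + 1 < n
  · have hnext := le_val_apply_of_val_add_one hf hidem hn hlast y ⟨y.val + 1, hy⟩ rfl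
    have := (hf x y y ⟨y.val + 1, hy⟩ (pathEdge_of_val_add_one hxy)
      (pathEdge_of_val_add_one rfl)).symm.val_le_add_one
    omega
  · rw [show y = ⟨n - 1, by omega⟩ from Fin.ext (by simp only; omega)] at hxy ⊢
    have := (hf x _ _ _ (pathEdge_of_val_add_one hxy) (pathEdge_self hlast)).symm.val_le_add_one
    rw [hidem] at this
    simp only at hxy this
    omega
termination_by n - y.val

theorem apply_eq_of_val_add_one (hf : IsPolymorphism n β f) (hidem : ∀ x, f x x = x)
    (hn : 2 ≤ n) (h01 : f ⟨0, by omega⟩ ⟨1, by omega⟩ = ⟨0, by omega⟩)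
    (hlast : β ⟨n - 1, by omega⟩ = true) (x y : Fin n) (hxy : x.val + 1 = y.val) :
    f x y = x :=
  Fin.ext <| le_antisymm (hf.val_apply_le_of_val_add_one hn h01 x y hxy)
    (hf.le_val_apply_of_val_add_one hidem (by omega) hlast x y hxy)

theorem apply_eq_left_of_le (hf : IsPolymorphism n β f) (hidem : ∀ x, f x x = x)
    (hn : 2 ≤ n) (h0 : β ⟨0, by omega⟩ = true) (h1 : β ⟨1, by omega⟩ = false)
    (hlast : β ⟨n - 1, by omega⟩ = true) (h01 : f ⟨0, by omega⟩ ⟨1, by omega⟩ = ⟨0, by omega⟩)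
    (x y : Fin n) (hxy : x ≤ y) : f x y = x := by
  rw [Fin.le_def] at hxy
  obtain h | h | h : x.val = y.val ∨ x.val + 1 = y.val ∨ x.val + 2 ≤ y.val := by omega
  · rw [Fin.ext h, hidem]
  · exact hf.apply_eq_of_val_add_one hidem hn h01 hlast x y h
  let y₀ : Fin n := ⟨y.val - 1, by omega⟩
  have hyy₀ : pathEdge n β y y₀ := pathEdge_of_val_eq_add_one (by simp only [y₀]; omega)
  have ih (z : Fin n) (hz : z.val ≤ y.val - 1) : f z y₀ = z :=
    apply_eq_left_of_le hf hidem hn h0 h1 hlast h01 z y₀ hz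
  apply Fin.ext
  rcases Nat.eq_zero_or_pos x.val with hx | hx
  · have hx0 : x = ⟨0, by omega⟩ := Fin.ext hx
    have e₀ := hf x y x y₀ (pathEdge_self (hx0 ▸ h0)) hyy₀
    have e₁ := hf x y ⟨1, by omega⟩ y₀ (pathEdge_of_val_add_one (by simp only; omega)) hyy₀
    rw [ih x (by omega)] at e₀
    rw [ih _ (by simp only; omega)] at e₁
    have := e₀.val_le_add_one
    have := e₁.val_ne_of_loopless h1
    simp only at this
    omega
  · have e₀ := hf x y ⟨x.val - 1, by omega⟩ y₀
      (pathEdge_of_val_eq_add_one (by simp only; omega)) hyy₀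
    have e₁ := hf x y ⟨x.val + 1, by omega⟩ y₀
      (pathEdge_of_val_add_one rfl) hyy₀
    rw [ih _ (by simp only; omega)] at e₀
    rw [ih _ (by simp only; omega)] at e₁
    have := e₀.val_le_add_one
    have := e₁.symm.val_le_add_one
    simp only at *
    omega
termination_by y.val

theorem apply_last_penultimate_eq (hf : IsPolymorphism n β f) (hidem : ∀ x, f x x = x) (hn : 2 ≤ n)
    (hpen : β ⟨n - 2, by omega⟩ = false) (hlast : β ⟨n - 1, by omega⟩ = true)
    (hsup : f ⟨n - 2, by omega⟩ ⟨n - 1, by omega⟩ = ⟨n - 2, by omega⟩) :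
    f ⟨n - 1, by omega⟩ ⟨n - 2, by omega⟩ = ⟨n - 1, by omega⟩ := by
  have e₀ := hf ⟨n - 1, by omega⟩ ⟨n - 2, by omega⟩ ⟨n - 1, by omega⟩ ⟨n - 1, by omega⟩
    (pathEdge_self hlast) (pathEdge_of_val_add_one (by simp only; omega))
  have e₁ := hf ⟨n - 1, by omega⟩ ⟨n - 2, by omega⟩ ⟨n - 2, by omega⟩ ⟨n - 1, by omega⟩
    (pathEdge_of_val_eq_add_one (by simp only; omega))
    (pathEdge_of_val_add_one (by simp only; omega))
  rw [hidem] at e₀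
  rw [hsup] at e₁
  have := e₀.symm.val_le_add_one
  have := e₁.val_ne_of_loopless hpen
  have := (f ⟨n - 1, by omega⟩ ⟨n - 2, by omega⟩).isLt
  apply Fin.ext
  simp only at *
  omega

theorem apply_eq_left_of_apply_zero_one (hf : IsPolymorphism n β f) (hidem : ∀ x, f x x = x)
    (hn : 2 ≤ n) (h0 : β ⟨0, by omega⟩ = true) (h1 : β ⟨1, by omega⟩ = false)
    (hpen : β ⟨n - 2, by omega⟩ = false) (hlast : β ⟨n - 1, by omega⟩ = true)
    (h01 : f ⟨0, by omega⟩ ⟨1, by omega⟩ = ⟨0, by omega⟩) (x y : Fin n) : f x y = x := by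
  have upper := hf.apply_eq_left_of_le hidem hn h0 h1 hlast h01
  rcases le_total x y with hxy | hyx
  · exact upper x y hxy
  have hrev (i j : ℕ) (h : i + j + 1 = n) : Fin.rev (⟨i, by omega⟩ : Fin n) = ⟨j, by omega⟩ :=
    Fin.ext (by rw [Fin.val_rev]; simp only; omega)
  have rev_zero := hrev 0 (n - 1) (by omega)
  have rev_one := hrev 1 (n - 2) (by omega)
  have rev_last := hrev (n - 1) 0 (by omega)
  have hlast01 := hf.apply_last_penultimate_eq hidem hn hpen hlast
    (upper _ _ (by simp [Fin.le_def]; omega))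
  have lower := hf.rev.apply_eq_left_of_le (fun z => by simp only [hidem, Fin.rev_rev]) hn
    (by simpa only [rev_zero] using hlast) (by simpa only [rev_one] using hpen)
    (by simpa only [rev_last] using h0) (by simp only [rev_zero, rev_one, hlast01, rev_last])
    x.rev y.rev (Fin.rev_le_rev.2 hyx)
  simpa only [Fin.rev_rev, Fin.rev_inj] using lower

theorem apply_zero_one_eq_zero_or_apply_one_zero_eq_zero (hf : IsPolymorphism n β f)
    (hidem : ∀ x, f x x = x) (hn : 2 ≤ n) (h0 : β ⟨0, by omega⟩ = true)
    (h1 : β ⟨1, by omega⟩ = false) :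
    f ⟨0, by omega⟩ ⟨1, by omega⟩ = ⟨0, by omega⟩ ∨
      f ⟨1, by omega⟩ ⟨0, by omega⟩ = ⟨0, by omega⟩ := by
  set v₀ : Fin n := ⟨0, by omega⟩
  set v₁ : Fin n := ⟨1, by omega⟩
  have e₀₁ := hf v₀ v₁ v₀ v₀ (pathEdge_self h0) (pathEdge_of_val_eq_add_one rfl)
  have e₁₀ := hf v₁ v₀ v₀ v₀ (pathEdge_of_val_eq_add_one rfl) (pathEdge_self h0)
  rw [hidem] at e₀₁ e₁₀
  have h₀₁ : (f v₀ v₁).val ≤ 1 := e₀₁.val_le_add_one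
  have h₁₀ : (f v₁ v₀).val ≤ 1 := e₁₀.val_le_add_one
  by_cases h : (f v₀ v₁).val = 0
  · exact Or.inl (Fin.ext h)
  have e := hf v₁ v₀ v₀ v₁ (pathEdge_of_val_eq_add_one rfl) (pathEdge_of_val_add_one rfl)
  rw [show f v₀ v₁ = v₁ from Fin.ext (show (f v₀ v₁).val = 1 by omega)] at e
  have h₁₀' : (f v₁ v₀).val ≠ 1 := e.val_ne_of_loopless h1
  exact Or.inr (Fin.ext (show (f v₁ v₀).val = 0 by omega))

end IsPolymorphism

/-- Every binary idempotent polymorphism of the partially reflexive path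
`P_{10α01}` (first vertex looped, second loopless, second-to-last loopless,
last looped, with `α` arbitrary in between) is a projection. -/
theorem binary_idempotent_polymorphisms_are_projections
    (n : ℕ) (hn : 4 ≤ n) (β : Fin n → Bool)
    (h0 : β ⟨0, by omega⟩ = true) (h1 : β ⟨1, by omega⟩ = false)
    (h2 : β ⟨n - 2, by omega⟩ = false) (h3 : β ⟨n - 1, by omega⟩ = true)
    (f : Fin n → Fin n → Fin n)
    (hpoly : ∀ x x' y y' : Fin n, pathEdge n β x y → pathEdge n β x' y' →
      pathEdge n β (f x x') (f y y'))
    (hidem : ∀ x, f x x = x) :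
    (∀ x y, f x y = x) ∨ (∀ x y, f x y = y) := by
  have hf : IsPolymorphism n β f := hpoly
  rcases hf.apply_zero_one_eq_zero_or_apply_one_zero_eq_zero hidem (by omega) h0 h1 with h01 | h10
  · exact Or.inl (hf.apply_eq_left_of_apply_zero_one hidem (by omega) h0 h1 h2 h3 h01)
  · exact Or.inr fun x y =>
      hf.swap.apply_eq_left_of_apply_zero_one hidem (by omega) h0 h1 h2 h3 h10 y x
end

section
/- Let G be a semicomplete digraph with a sink but no source, obtained from a core C (either the directed 3-cycle or the digraph K_2 with edges in both directions between two vertices) by iteratively adding sinks t_1,...,t_k (each new vertex t_i receives an edge from every previously present vertex). Define the ternary operation f that acts as the dual discriminator on C and returns t_i with the largest index i whenever the argument triple contains some element of {t_1,...,t_k}. Then f is a polymorphism of G, and moreover f is a Hubie operation with source any vertex z of C: f(z,G,G) = f(G,z,G) = f(G,G,z) = G (surjectivity is retained when any one argument is fixed to z). -/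
open Classical in
/-- The dual discriminator: the majority operation returning its first argument
when all three arguments are pairwise distinct. -/
noncomputable def dualDiscr {C : Type} (a b c : C) : C :=
  if b = c then b else a

/-- The core is either the directed 3-cycle or `K₂` with edges in both directions. -/
def IsDC3orK2 {C : Type} (Ec : C → C → Prop) : Prop :=
  (∃ e : C ≃ Fin 3, ∀ x y, Ec x y ↔ ((e y).val = ((e x).val + 1) % 3)) ∨
  (∃ e : C ≃ Fin 2, ∀ x y, Ec x y ↔ e x ≠ e y)

/-- The semicomplete digraph obtained from the core `(C, Ec)` by iteratively
adding sinks `t_1, …, t_k`: each `t_i` receives an edge from every previously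
present vertex. -/
def addedSinksEdge {C : Type} (Ec : C → C → Prop) (k : ℕ) :
    (C ⊕ Fin k) → (C ⊕ Fin k) → Prop
  | Sum.inl a, Sum.inl b => Ec a b
  | Sum.inl _, Sum.inr _ => True
  | Sum.inr i, Sum.inr j => i < j
  | Sum.inr _, Sum.inl _ => False

/-- The ternary operation acting as the dual discriminator on the core and
returning the added sink `t_i` of largest index whenever the argument triple
contains an added sink. -/
noncomputable def sinkDD {C : Type} (k : ℕ) :
    (C ⊕ Fin k) → (C ⊕ Fin k) → (C ⊕ Fin k) → (C ⊕ Fin k)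
  | Sum.inl a, Sum.inl b, Sum.inl c => Sum.inl (dualDiscr a b c)
  | Sum.inr i, Sum.inl _, Sum.inl _ => Sum.inr i
  | Sum.inl _, Sum.inr i, Sum.inl _ => Sum.inr i
  | Sum.inl _, Sum.inl _, Sum.inr i => Sum.inr i
  | Sum.inr i, Sum.inr j, Sum.inl _ => Sum.inr (max i j)
  | Sum.inr i, Sum.inl _, Sum.inr j => Sum.inr (max i j)
  | Sum.inl _, Sum.inr i, Sum.inr j => Sum.inr (max i j)
  | Sum.inr i, Sum.inr j, Sum.inr l => Sum.inr (max i (max j l))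

lemma dualDiscr_poly {C : Type} {Ec : C → C → Prop} (hcore : IsDC3orK2 Ec)
    {x₁ x₂ x₃ y₁ y₂ y₃ : C} (h1 : Ec x₁ y₁) (h2 : Ec x₂ y₂) (h3 : Ec x₃ y₃) :
    Ec (dualDiscr x₁ x₂ x₃) (dualDiscr y₁ y₂ y₃) := by
  have key : x₂ = x₃ ↔ y₂ = y₃ := by
    rcases hcore with ⟨e, he⟩ | ⟨e, he⟩
    · rw [he] at h2 h3
      constructor
      · intro h; subst h
        apply e.injective
        apply Fin.val_injective
        omega
      · intro h; subst h
        apply e.injective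
        apply Fin.val_injective
        have b2 := (e x₂).isLt
        have b3 := (e x₃).isLt
        omega
    · rw [he] at h2 h3
      have hx2 := (e x₂).isLt
      have hx3 := (e x₃).isLt
      have hy2 := (e y₂).isLt
      have hy3 := (e y₃).isLt
      have n2 : (e x₂).val ≠ (e y₂).val := fun h => h2 (Fin.val_injective h)
      have n3 : (e x₃).val ≠ (e y₃).val := fun h => h3 (Fin.val_injective h)
      constructor
      · intro h; subst h
        apply e.injective
        apply Fin.val_injective
        omega
      · intro h; subst h
        apply e.injective
        apply Fin.val_injective
        omega
  by_cases h : x₂ = x₃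
  · have hy : y₂ = y₃ := key.mp h
    simpa [dualDiscr, h, hy] using h2
  · have hy : y₂ ≠ y₃ := fun hh => h (key.mpr hh)
    simpa [dualDiscr, h, hy] using h1

lemma fin_val_max {k : ℕ} (a b : Fin k) : (max a b).val = max a.val b.val := by
  rcases le_total a b with h | h
  · simp [max_eq_right h, max_eq_right (Fin.le_def.mp h)]
  · simp [max_eq_left h, max_eq_left (Fin.le_def.mp h)]

/-- For a semicomplete digraph with a sink and no source, built from the directed
3-cycle or double-edge `K₂` by iteratively adding sinks, the operation `sinkDD`
is a polymorphism, and it is a Hubie operation with source any vertex `z` of the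
core: it fixes `z` and remains surjective when any one coordinate is fixed to `z`. -/
theorem sinkDD_polymorphism_and_hubie {C : Type} (Ec : C → C → Prop) (k : ℕ)
    (hcore : IsDC3orK2 Ec) (hk : 1 ≤ k) :
    (∀ x₁ x₂ x₃ y₁ y₂ y₃ : C ⊕ Fin k,
      addedSinksEdge Ec k x₁ y₁ → addedSinksEdge Ec k x₂ y₂ →
      addedSinksEdge Ec k x₃ y₃ →
      addedSinksEdge Ec k (sinkDD k x₁ x₂ x₃) (sinkDD k y₁ y₂ y₃)) ∧
    (∀ z : C,
      sinkDD k (Sum.inl z) (Sum.inl z) (Sum.inl z) = Sum.inl z ∧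
      (∀ v : C ⊕ Fin k, ∃ a b, sinkDD k (Sum.inl z) a b = v) ∧
      (∀ v : C ⊕ Fin k, ∃ a b, sinkDD k a (Sum.inl z) b = v) ∧
      (∀ v : C ⊕ Fin k, ∃ a b, sinkDD k a b (Sum.inl z) = v)) := by
  constructor
  · intro x₁ x₂ x₃ y₁ y₂ y₃ h1 h2 h3
    rcases x₁ with a1 | i1 <;> rcases y₁ with b1 | j1 <;>
      rcases x₂ with a2 | i2 <;> rcases y₂ with b2 | j2 <;>
      rcases x₃ with a3 | i3 <;> rcases y₃ with b3 | j3 <;>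
      simp_all [sinkDD, addedSinksEdge] <;>
      first
        | exact dualDiscr_poly hcore h1 h2 h3
        | (simp only [Fin.lt_def, fin_val_max] at *; omega)
  · intro z
    refine ⟨by simp [sinkDD, dualDiscr], ?_, ?_, ?_⟩ <;>
      · rintro (c | i)
        · exact ⟨Sum.inl c, Sum.inl c, by simp [sinkDD, dualDiscr]⟩
        · exact ⟨Sum.inr i, Sum.inl z, by simp [sinkDD]⟩
end

section
/- Let A be a structure of size n and let Ω_m be a non-degenerate set of adversaries of length m. If A models the canonical Π₂ sentence φ_{n,Ω_m,A} (having n·m universal variables), then the full adversary A^m is reactively composable from Ω_m. In particular, the Skolem witnesses to the canonical sentence, when each block of n universal variables enumerates A, yield a polymorphism f and partial functions g^j_i depending only on their last argument that witness the reactive composition. -/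
/-- A relational signature: a type of relation symbols with arities. -/
structure RelSig where
  symb : Type
  arity : symb → ℕ

/-- A relational structure over signature `σ` on domain `A`. -/
structure Struc (σ : RelSig) (A : Type) where
  rel : ∀ s : σ.symb, (Fin (σ.arity s) → A) → Prop

/-- The direct power of `St` indexed by `I`, with relations computed coordinatewise. -/
def prodStruc {σ : RelSig} {A : Type} (St : Struc σ A) (I : Type) :
    Struc σ (I → A) :=
  ⟨fun s t => ∀ p : I, St.rel s (fun i => t i p)⟩

/-- `h` is a homomorphism from `St₁` to `St₂`. -/
def IsHom {σ : RelSig} {A₁ A₂ : Type} (St₁ : Struc σ A₁) (St₂ : Struc σ A₂)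
    (h : A₁ → A₂) : Prop :=
  ∀ s t, St₁.rel s t → St₂.rel s (fun i => h (t i))

/-- A polymorphism of `St` of arity indexed by `κ`. -/
def IsPolymI {σ : RelSig} {A : Type} (St : Struc σ A) {κ : Type}
    (f : (κ → A) → A) : Prop :=
  ∀ s (ts : κ → Fin (σ.arity s) → A), (∀ j, St.rel s (ts j)) →
    St.rel s (fun i => f (fun j => ts j i))

/-- `μ : [n] × [m] → A` is consistent with the adversary `O` of length `m`:
every tuple obtained by choosing one row in each of the `m` columns lies in `O`. -/
def Consistent {A : Type} {n m : ℕ} (O : Set (Fin m → A))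
    (μ : Fin n × Fin m → A) : Prop :=
  ∀ c : Fin m → Fin n, (fun j => μ (c j, j)) ∈ O

/-- The index set of the product defining the canonical Π₂ sentence: pairs of an
adversary `O ∈ Ω` and a map `μ` consistent with `O`. -/
def CanIdx {A : Type} (n m : ℕ) (Ω : Set (Set (Fin m → A))) : Type :=
  {p : Set (Fin m → A) × (Fin n × Fin m → A) // p.1 ∈ Ω ∧ Consistent p.1 p.2}

/-- The element of the product corresponding to the constant `c_{i,j}`. -/
def constElem {A : Type} (n m : ℕ) (Ω : Set (Set (Fin m → A)))
    (c : Fin n × Fin m) : CanIdx n m Ω → A :=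
  fun p => p.val.2 c

/-- If `A` (of size `n`) models the canonical Π₂ sentence `φ_{n,Ω_m,A}` of a
non-degenerate set of adversaries `Ω_m` of length `m` — i.e. for every
instantiation `w` of the `n·m` universal variables there is a homomorphism from
the underlying product structure to `A` sending each constant element to the
corresponding value of `w` — then the full adversary `A^m` is reactively
composable from `Ω_m`, via a polymorphism `f` (whose arity is the number of
pairs `(O,μ)`) and partial functions `g^j_i` depending only on their last
argument. -/
theorem canonical_sentence_implies_reactive_composition
    {σ : RelSig} {A : Type} [Fintype A] (n m : ℕ) (hn : Fintype.card A = n)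
    (St : Struc σ A) (Ω : Set (Set (Fin m → A)))
    (hnondeg : Function.Injective (constElem n m Ω))
    (hmodels : ∀ w : Fin n × Fin m → A,
      ∃ h : (CanIdx n m Ω → A) → A,
        IsHom (prodStruc St (CanIdx n m Ω)) St h ∧
        ∀ c : Fin n × Fin m, h (constElem n m Ω c) = w c) :
    ∃ f : (CanIdx n m Ω → A) → A, IsPolymI St f ∧
      ∃ g : CanIdx n m Ω → (i : Fin m) → (Fin (i.val + 1) → A) → A,
        ∀ a : Fin m → A,
          (∀ j : CanIdx n m Ω,
            (fun i : Fin m => g j i (fun l => a (Fin.castLE i.isLt l))) ∈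
              j.val.1) ∧
          (∀ i : Fin m,
            a i = f (fun j => g j i (fun l => a (Fin.castLE i.isLt l)))) := by
  have e : Fin n ≃ A := (Fintype.equivFinOfCardEq hn).symm
  obtain ⟨h, hhom, hconst⟩ := hmodels (fun c => e c.1)
  refine ⟨h, ?_, fun j i v => j.val.2 (e.symm (v (Fin.last i.val)), i), ?_⟩
  · intro s ts hts
    exact hhom s (fun i j => ts j i) (fun p => hts p)
  · intro a
    have hlast : ∀ i : Fin m,
        a (Fin.castLE i.isLt (Fin.last i.val)) = a i := by
      intro i; rfl
    constructor
    · intro j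
      have := j.prop.2 (fun i => e.symm (a i))
      simpa [hlast] using this
    · intro i
      have : (fun j : CanIdx n m Ω =>
          j.val.2 (e.symm (a (Fin.castLE i.isLt (Fin.last i.val))), i)) =
          constElem n m Ω (e.symm (a i), i) := by
        funext j; rw [hlast]; rfl
      rw [this, hconst]
      simp
end

section
/- Let A be a finite structure and φ a positive-Horn sentence in prenex form with m universally quantified variables. Let 𝒜 be an adversary of length m and Ω_m a set of adversaries of length m. If the existential player has a winning strategy in the (A,φ)-game against every adversary in Ω_m, and 𝒜 is reactively composable from Ω_m, then the existential player has a winning strategy against 𝒜 (in particular, if 𝒜 is the full adversary A^m, then A ⊨ φ). -/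
/-- `f` is a `k`-ary polymorphism of the structure `St`. -/
def IsPolym {σ : RelSig} {A : Type} (St : Struc σ A) {k : ℕ}
    (f : (Fin k → A) → A) : Prop :=
  ∀ s (ts : Fin k → Fin (σ.arity s) → A), (∀ j, St.rel s (ts j)) →
    St.rel s (fun i => f (fun j => ts j i))

/-- A prenex positive Horn sentence with `m` universal variables:
`q` variables in total, the `j`-th universal variable sitting at position
`uvar j` of the quantifier prefix (all other positions being existential),
and a quantifier-free part that is a conjunction of relational atoms. -/
structure PHSentence (σ : RelSig) (m : ℕ) where
  q : ℕ
  uvar : Fin m → Fin q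
  mono : StrictMono uvar
  atoms : List ((s : σ.symb) × (Fin (σ.arity s) → Fin q))

open Classical in
/-- The assignment to all variables induced by an assignment `π` of the
universal variables and Skolem functions `sk` for the existential ones. -/
noncomputable def assemble {A : Type} {m q : ℕ} (uvar : Fin m → Fin q)
    (sk : Fin q → (Fin m → A) → A) (π : Fin m → A) (p : Fin q) : A :=
  if h : ∃ j, uvar j = p then π h.choose else sk p π

/-- The existential player has a winning strategy in the `(St, φ)`-game against
the adversary `B`: there are Skolem functions, each depending only on the
universal variables preceding the corresponding existential variable, such that
for every play of the universal variables inside `B` all atoms of `φ` are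
satisfied. -/
def Wins {σ : RelSig} {A : Type} {m : ℕ} (St : Struc σ A) (φ : PHSentence σ m)
    (B : Set (Fin m → A)) : Prop :=
  ∃ sk : Fin φ.q → (Fin m → A) → A,
    (∀ (p : Fin φ.q) (π π' : Fin m → A),
      (∀ j : Fin m, (φ.uvar j : ℕ) < (p : ℕ) → π j = π' j) → sk p π = sk p π') ∧
    ∀ π ∈ B, ∀ a ∈ φ.atoms,
      St.rel a.1 (fun i => assemble φ.uvar sk π (a.2 i))

/-- The adversary `𝒜` is reactively composable from the set of adversaries `Ω`:
`𝒜 ⊴ f(B₁,…,B_k)` for some polymorphism `f` of `St` and adversaries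
`B₁,…,B_k ∈ Ω`, witnessed by partial functions `g^j_i : A^i → A`. -/
def ReactComp {σ : RelSig} {A : Type} {m : ℕ} (St : Struc σ A)
    (𝒜 : Set (Fin m → A)) (Ω : Set (Set (Fin m → A))) : Prop :=
  ∃ (k : ℕ) (Bs : Fin k → Set (Fin m → A)) (f : (Fin k → A) → A),
    (∀ j, Bs j ∈ Ω) ∧ IsPolym St f ∧
    ∃ g : Fin k → (i : Fin m) → (Fin (i.val + 1) → A) → A,
      ∀ a ∈ 𝒜,
        (∀ j, (fun i : Fin m => g j i (fun l => a (Fin.castLE i.isLt l))) ∈ Bs j) ∧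
        (∀ i : Fin m, a i = f (fun j => g j i (fun l => a (Fin.castLE i.isLt l))))

/-- Chen's reactive-composition theorem: if the existential player wins the
`(St,φ)`-game against every adversary in `Ω_m` and `𝒜` is reactively composable
from `Ω_m`, then she wins against `𝒜` (in particular, taking `𝒜 = A^m`,
`St ⊨ φ`). -/
theorem reactive_composition_transfers_winning
    {σ : RelSig} {A : Type} [Fintype A] {m : ℕ}
    (St : Struc σ A) (φ : PHSentence σ m)
    (𝒜 : Set (Fin m → A)) (Ω : Set (Set (Fin m → A)))
    (hwin : ∀ B ∈ Ω, Wins St φ B)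
    (hcomp : ReactComp St 𝒜 Ω) :
    Wins St φ 𝒜 := by
  classical
  obtain ⟨k, Bs, f, hBs, hpoly, g, hg⟩ := hcomp
  choose sk hdep hsat using fun j => hwin (Bs j) (hBs j)
  set πj : Fin k → (Fin m → A) → (Fin m → A) :=
    fun j π i => g j i (fun l => π (Fin.castLE i.isLt l)) with hπj
  refine ⟨fun p π => f (fun j => sk j p (πj j π)), ?_, ?_⟩
  · intro p π π' h
    refine congrArg f (funext fun j => ?_)
    apply hdep j p
    intro i hi
    simp only [hπj]
    congr 1
    funext l
    apply h
    calc (φ.uvar (Fin.castLE i.isLt l) : ℕ)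
        ≤ (φ.uvar i : ℕ) := by
          have hle : Fin.castLE i.isLt l ≤ i := by
            simp [Fin.le_def]; omega
          exact_mod_cast φ.mono.monotone hle
      _ < (p : ℕ) := hi
  · intro π hπ a ha
    obtain ⟨hmem, hc⟩ := hg π hπ
    have key : ∀ p, assemble φ.uvar (fun p π => f (fun j => sk j p (πj j π))) π p
        = f (fun j => assemble φ.uvar (sk j) (πj j π) p) := by
      intro p
      unfold assemble
      by_cases h : ∃ i, φ.uvar i = p
      · simp only [dif_pos h]
        exact hc h.choose
      · simp only [dif_neg h]
    have := hpoly a.1 (fun j i => assemble φ.uvar (sk j) (πj j π) (a.2 i))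
      (fun j => hsat j (πj j π) (hmem j) a ha)
    convert this using 1
    funext i
    exact key (a.2 i)
end

section
/- Let B be a finite structure and C ⊆ B a subset of its domain. Then B is 0-collapsible from source C if and only if the |C|-th direct power B^{|C|} is 0-collapsible from the singleton source {x}, where x is any |C|-tuple containing every element of C. -/
/-- `St` is 0-collapsible from source `S`: a positive Horn sentence is true in
`St` iff, for every `c ∈ S`, it remains true when all its universal variables
are instantiated to `c`. -/
def ZeroCollapsible {σ : RelSig} {A : Type} (St : Struc σ A) (S : Set A) : Prop :=
  ∀ (m : ℕ) (φ : PHSentence σ m),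
    Wins St φ Set.univ ↔ ∀ c ∈ S, Wins St φ {fun _ => c}

/-- Transfer of `assemble` along a map `f` relating assignments and Skolem
functions. -/
lemma assemble_map {A A' : Type} {m q : ℕ} (uvar : Fin m → Fin q)
    (sk : Fin q → (Fin m → A) → A) (sk' : Fin q → (Fin m → A') → A')
    (π : Fin m → A) (π' : Fin m → A') (f : A → A')
    (hπ : ∀ j, f (π j) = π' j) (hsk : ∀ p, f (sk p π) = sk' p π') (p : Fin q) :
    f (assemble uvar sk π p) = assemble uvar sk' π' p := by
  unfold assemble
  by_cases h : ∃ j, uvar j = p <;> simp only [h, dif_pos, dif_neg, not_false_iff]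
  · exact hπ _
  · exact hsk p

/-- A structure and its (nonempty) finite power win the same games against the
full adversary. -/
lemma wins_univ_iff {σ : RelSig} {A : Type} {m k : ℕ} (hk : 0 < k)
    (St : Struc σ A) (φ : PHSentence σ m) :
    Wins St φ Set.univ ↔ Wins (prodStruc St (Fin k)) φ Set.univ := by
  constructor
  · rintro ⟨sk, hloc, hwin⟩
    refine ⟨fun p (π : Fin m → Fin k → A) i => sk p (fun j => π j i), ?_, ?_⟩
    · intro p π π' h
      funext i
      exact hloc p _ _ (fun j hj => congrFun (h j hj) i)
    · intro π _ a ha i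
      have key : ∀ p, assemble φ.uvar (fun p (π : Fin m → Fin k → A) i => sk p (fun j => π j i)) π p i
          = assemble φ.uvar sk (fun j => π j i) p := fun p =>
        assemble_map φ.uvar _ sk π (fun j => π j i) (fun g => g i)
          (fun _ => rfl) (fun _ => rfl) p
      have : (fun t => assemble φ.uvar (fun p (π : Fin m → Fin k → A) i => sk p (fun j => π j i)) π (a.2 t) i)
          = (fun t => assemble φ.uvar sk (fun j => π j i) (a.2 t)) :=
        funext fun t => key (a.2 t)
      rw [this]
      exact hwin _ (Set.mem_univ _) a ha
  · rintro ⟨sk, hloc, hwin⟩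
    set i₀ : Fin k := ⟨0, hk⟩
    refine ⟨fun p π => sk p (fun j _ => π j) i₀, ?_, ?_⟩
    · intro p π π' h
      have : sk p (fun j _ => π j) = sk p (fun j _ => π' j) :=
        hloc p _ _ (fun j hj => funext fun _ => h j hj)
      exact congrFun this i₀
    · intro π _ a ha
      have key : ∀ p, assemble φ.uvar sk (fun j _ => π j) p i₀
          = assemble φ.uvar (fun p π => sk p (fun j _ => π j) i₀) π p := fun p =>
        assemble_map φ.uvar sk _ (fun j _ => π j) π (fun g => g i₀)
          (fun _ => rfl) (fun _ => rfl) p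
      have h2 := hwin (fun j _ => π j) (Set.mem_univ _) a ha i₀
      have : (fun t => assemble φ.uvar sk (fun j _ => π j) (a.2 t) i₀)
          = (fun t => assemble φ.uvar (fun p π => sk p (fun j _ => π j) i₀) π (a.2 t)) :=
        funext fun t => key (a.2 t)
      rw [this] at h2
      exact h2

/-- Winning against a constant tuple adversary in the power amounts to winning
against each coordinate's constant adversary. -/
lemma wins_const_iff {σ : RelSig} {A : Type} {m k : ℕ}
    (St : Struc σ A) (φ : PHSentence σ m) (x : Fin k → A) :
    Wins (prodStruc St (Fin k)) φ {fun _ => x} ↔ ∀ i, Wins St φ {fun _ => x i} := by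
  constructor
  · rintro ⟨sk, _, hwin⟩ i
    refine ⟨fun p _ => sk p (fun _ => x) i, fun _ _ _ _ => rfl, ?_⟩
    · intro π hπ a ha
      rw [Set.mem_singleton_iff] at hπ
      subst hπ
      have key : ∀ p, assemble φ.uvar sk (fun _ => x) p i
          = assemble φ.uvar (fun p _ => sk p (fun _ => x) i) (fun _ => x i) p := fun p =>
        assemble_map φ.uvar sk _ (fun _ => x) (fun _ => x i) (fun g => g i)
          (fun _ => rfl) (fun _ => rfl) p
      have h2 := hwin (fun _ => x) rfl a ha i
      have : (fun t => assemble φ.uvar sk (fun _ => x) (a.2 t) i)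
          = (fun t => assemble φ.uvar (fun p _ => sk p (fun _ => x) i) (fun _ => x i) (a.2 t)) :=
        funext fun t => key (a.2 t)
      rw [this] at h2
      exact h2
  · intro h
    choose sk hloc hwin using h
    refine ⟨fun p (π : Fin m → Fin k → A) i => sk i p (fun j => π j i), ?_, ?_⟩
    · intro p π π' h
      funext i
      exact hloc i p _ _ (fun j hj => congrFun (h j hj) i)
    · intro π hπ a ha i
      rw [Set.mem_singleton_iff] at hπ
      subst hπ
      have key : ∀ p, assemble φ.uvar (fun p (π : Fin m → Fin k → A) i => sk i p (fun j => π j i)) (fun _ => x) p i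
          = assemble φ.uvar (sk i) (fun _ => x i) p := fun p =>
        assemble_map φ.uvar _ (sk i) (fun _ => x) (fun _ => x i) (fun g => g i)
          (fun _ => rfl) (fun _ => rfl) p
      have : (fun t => assemble φ.uvar (fun p (π : Fin m → Fin k → A) i => sk i p (fun j => π j i)) (fun _ => x) (a.2 t) i)
          = (fun t => assemble φ.uvar (sk i) (fun _ => x i) (a.2 t)) :=
        funext fun t => key (a.2 t)
      rw [this]
      exact hwin i (fun _ => x i) rfl a ha

/-- A finite structure `B` is 0-collapsible from source `C` iff the power
`B^{|C|}` is 0-collapsible from the singleton source `{x}`, for any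
(rainbow) `|C|`-tuple `x` containing every element of `C`. -/
theorem zero_collapsible_rainbow_source {σ : RelSig} {B : Type} [Fintype B]
    (St : Struc σ B) (C : Finset B) (hC : C.Nonempty) :
    ∀ x : Fin C.card → B, (↑C : Set B) ⊆ Set.range x →
      (ZeroCollapsible St (↑C : Set B) ↔
        ZeroCollapsible (prodStruc St (Fin C.card)) {x}) := by
  intro x hx
  have hk : 0 < C.card := Finset.card_pos.2 hC
  have hrange : Set.range x = (↑C : Set B) := by
    classical
    have h2 : C ⊆ Finset.image x Finset.univ := by
      intro c hc
      simp only [Finset.mem_image, Finset.mem_univ, true_and]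
      exact hx hc
    have h3 : (Finset.image x Finset.univ).card ≤ C.card :=
      Finset.card_image_le.trans (by simp)
    have h4 : C = Finset.image x Finset.univ :=
      Finset.eq_of_subset_of_card_le h2 h3
    apply Set.Subset.antisymm _ hx
    rintro b ⟨i, rfl⟩
    simp only [Finset.mem_coe, h4]
    exact Finset.mem_image_of_mem x (Finset.mem_univ i)
  have hmemC : ∀ i, x i ∈ (↑C : Set B) := fun i => hrange ▸ Set.mem_range_self i
  have hsurj : ∀ c ∈ (↑C : Set B), ∃ i, x i = c := fun c hc => by
    rw [← hrange] at hc; exact hc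
  have main : ∀ (m : ℕ) (φ : PHSentence σ m),
      (∀ c ∈ (↑C : Set B), Wins St φ {fun _ => c}) ↔
      (∀ c ∈ ({x} : Set (Fin C.card → B)),
        Wins (prodStruc St (Fin C.card)) φ {fun _ => c}) := by
    intro m φ
    constructor
    · intro h c hc
      rw [Set.mem_singleton_iff] at hc
      rw [hc, wins_const_iff]
      exact fun i => h (x i) (hmemC i)
    · intro h c hc
      obtain ⟨i, rfl⟩ := hsurj c hc
      exact (wins_const_iff St φ x).mp (h x rfl) i
  constructor
  · intro h m φ
    rw [← wins_univ_iff hk St φ, h m φ]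
    exact main m φ
  · intro h m φ
    rw [wins_univ_iff hk St φ, h m φ]
    exact (main m φ).symm
end

section
/- Let B be a finite structure with domain [n] and 1 ∈ [n]. If B admits a simple A-shop ξ with ξ(1) = [n] as a surjective hyper-endomorphism, then universal relativisation to 1 holds for equality-free positive-Horn sentences: for every such sentence φ with m universal variables, B ⊨ φ if and only if B satisfies the sentence obtained from φ by instantiating every universal variable to 1. (I.e., B is 0-collapsible from source {1}.) -/
/-- If a finite structure admits a simple A-shop `ξ` with `ξ d = A` as a
surjective hyper-endomorphism, then universal relativisation to `d` holds for
equality-free positive Horn sentences: such a sentence is true iff it is true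
with all universal variables instantiated to `d` (i.e. the structure is
0-collapsible from source `{d}`). -/
theorem simple_Ashe_implies_zero_collapsible {σ : RelSig} {A : Type} [Fintype A]
    (St : Struc σ A) (d : A) (ξ : A → Set A)
    (hfull : ξ d = Set.univ)
    (hsimple : ∀ x : A, x ≠ d → ∃ y, ξ x = {y})
    (hnonempty : ∀ x : A, (ξ x).Nonempty)
    (hsurj : ∀ y : A, ∃ x, y ∈ ξ x)
    (hshe : ∀ s (t : Fin (σ.arity s) → A), St.rel s t →
      ∀ t' : Fin (σ.arity s) → A, (∀ i, t' i ∈ ξ (t i)) → St.rel s t') :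
    ∀ (m : ℕ) (φ : PHSentence σ m),
      Wins St φ Set.univ ↔ Wins St φ {fun _ => d} := by
  intro m φ
  constructor
  · rintro ⟨sk, h1, h2⟩
    exact ⟨sk, h1, fun π _ => h2 π (Set.mem_univ π)⟩
  · rintro ⟨sk, h1, h2⟩
    refine ⟨fun p _ => (hnonempty (sk p (fun _ => d))).choose,
      fun p π π' _ => rfl, ?_⟩
    intro π _ a ha
    have hold := h2 (fun _ => d) rfl a ha
    refine hshe a.1 _ hold _ ?_
    intro i
    unfold assemble
    by_cases h : ∃ j, φ.uvar j = a.2 i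
    · simp only [h, dif_pos]
      rw [hfull]
      trivial
    · simp only [h, dif_neg, not_false_iff]
      exact (hnonempty _).choose_spec
end
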